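/- Let m₀(z) = (1+z³)/√2 and φ = (1/3)·χ_{[0,3)} ∈ L²(ℝ). With π(e_n)ψ(x) = ψ(x-n) and h_φ(z) = ∑_{n∈ℤ} z^n ⟨π(e_n)φ, φ⟩, one has ⟨π(e_1)φ,φ⟩ = 2/9 and ⟨π(e_2)φ,φ⟩ = 1/9; hence the state σ_φ on the algebra generated by U,V (with UVU^{-1}=V², V = translation by 1, (Uψ)(x) = 2^{-1/2}ψ(x/2)) is not tracial, since σ_φ(UVU^{-1}) = σ_φ(V²) = 1/9 ≠ 2/9 = σ_φ(V). -/

import Mathlib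

open MeasureTheory Set

/-- The scaling function `φ = (1/3)χ_{[0,3)}`. -/
noncomputable def phifun : ℝ → ℝ :=
  Set.indicator (Set.Ico (0:ℝ) 3) (fun _ => 1/3)

/-- The dilation `(Uψ)(x) = 2^{-1/2} ψ(x/2)`. -/
noncomputable def Uop (ψ : ℝ → ℂ) : ℝ → ℂ :=
  fun x => (Real.sqrt 2 : ℂ)⁻¹ * ψ (x / 2)

/-- The inverse dilation `(U⁻¹ψ)(x) = 2^{1/2} ψ(2x)`. -/
noncomputable def Uinv (ψ : ℝ → ℂ) : ℝ → ℂ :=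
  fun x => (Real.sqrt 2 : ℂ) * ψ (2 * x)

/-- The translation `(Vψ)(x) = ψ(x-1)`. -/
def Vop (ψ : ℝ → ℂ) : ℝ → ℂ := fun x => ψ (x - 1)

lemma phifun_sub_mul_phifun {a : ℝ} (ha : 0 ≤ a) (x : ℝ) :
    phifun (x - a) * phifun x = (Ico a 3).indicator (fun _ => 1 / 9) x := by
  simp only [phifun, indicator_apply, mem_Ico]
  split_ifs <;> grind

lemma integral_phifun_sub_mul_phifun {a : ℝ} (ha : 0 ≤ a) :
    ∫ x, phifun (x - a) * phifun x = max (3 - a) 0 / 9 := by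
  simp only [phifun_sub_mul_phifun ha, integral_indicator_const _ measurableSet_Ico,
    measureReal_def, Real.volume_Ico, ENNReal.toReal_ofReal', smul_eq_mul]
  ring

lemma Uop_Vop_Uinv (ψ : ℝ → ℂ) : Uop (Vop (Uinv ψ)) = Vop (Vop ψ) := by
  have hsqrt : (Real.sqrt 2 : ℂ) ≠ 0 := by simp
  ext x
  simp only [Uop, Vop, Uinv, inv_mul_cancel_left₀ hsqrt]
  congr 1; ring

/-- `⟨π(e₁)φ,φ⟩ = 2/9`, `⟨π(e₂)φ,φ⟩ = 1/9`, `UVU⁻¹ = V²`,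
and hence the state `σ_φ` is not tracial since `σ_φ(UVU⁻¹) = σ_φ(V²) = 1/9
≠ 2/9 = σ_φ(V)`. -/
theorem stmt13 :
    (∫ x : ℝ, phifun (x - 1) * phifun x = 2/9) ∧
    (∫ x : ℝ, phifun (x - 2) * phifun x = 1/9) ∧
    (∀ ψ : ℝ → ℂ, ∀ x : ℝ, Uop (Vop (Uinv ψ)) x = Vop (Vop ψ) x) ∧
    ((1:ℝ)/9 ≠ 2/9) := by
  refine ⟨?_, ?_, fun ψ x => congrFun (Uop_Vop_Uinv ψ) x, by norm_num⟩
  · rw [integral_phifun_sub_mul_phifun zero_le_one]; norm_num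
  · rw [integral_phifun_sub_mul_phifun zero_le_two]; norm_num
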